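/- Let G be a simple stochastic game and let T be an end component of G with t ∉ T. Then V(s) ≤ exit^max_V(T) for every s ∈ T; that is, no state of an end component not containing the target can have a value exceeding the V-value of Maximizer's best exiting action from the end component. -/
import Mathlib


/-- A simple stochastic game (SG): a finite set of states `S` partitioned into
Maximizer states (`isMax s = true`) and Minimizer states (`isMax s = false`),
a target state, a sink state, a finite set of actions `A`, a nonempty set of
available actions at each state, and a transition function assigning to each
state and available action a probability distribution over states; the target
and the sink each have exactly one available action, a self-loop with
probability 1. -/
structure SG (S A : Type) [Fintype S] [DecidableEq S] [Fintype A] [DecidableEq A] where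
  isMax : S → Bool
  target : S
  sink : S
  target_ne_sink : target ≠ sink
  Av : S → Finset A
  Av_nonempty : ∀ s, (Av s).Nonempty
  δ : S → A → S → ℝ
  δ_nonneg : ∀ s a s', 0 ≤ δ s a s'
  δ_sum : ∀ s, ∀ a ∈ Av s, ∑ s', δ s a s' = 1
  target_loop : ∃ a, Av target = {a} ∧ δ target a target = 1
  sink_loop : ∃ a, Av sink = {a} ∧ δ sink a sink = 1

namespace SG

variable {S A : Type} [Fintype S] [DecidableEq S] [Fintype A] [DecidableEq A]

/-- `f(s,a) := Σ_{s'} δ(s,a)(s') · f(s')`. -/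
noncomputable def fval (G : SG S A) (f : S → ℝ) (s : S) (a : A) : ℝ :=
  ∑ s', G.δ s a s' * f s'

/-- `f : S → [0,1]`. -/
def InUnit (f : S → ℝ) : Prop := ∀ s, 0 ≤ f s ∧ f s ≤ 1

/-- The right-hand side of the Bellman equations at a (non-target, non-sink)
state `s`, with available actions given by `Av'`:
`max_{a ∈ Av'(s)} f(s,a)` at Maximizer states and `min_{a ∈ Av'(s)} f(s,a)`
at Minimizer states. -/
noncomputable def bellmanOn (G : SG S A) (Av' : S → Finset A) (f : S → ℝ) (s : S) : ℝ :=
  if G.isMax s then sSup (G.fval f s '' ↑(Av' s)) else sInf (G.fval f s '' ↑(Av' s))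

/-- `f : S → [0,1]` is a solution of the Bellman equations of the game with
available actions restricted to `Av'`. -/
def IsSolutionOn (G : SG S A) (Av' : S → Finset A) (f : S → ℝ) : Prop :=
  InUnit f ∧ f G.target = 1 ∧ f G.sink = 0 ∧
    ∀ s, s ≠ G.target → s ≠ G.sink → f s = G.bellmanOn Av' f s

/-- `f` is a solution of the Bellman equations of `G`. -/
def IsSolution (G : SG S A) (f : S → ℝ) : Prop := G.IsSolutionOn G.Av f

/-- `V` is the least solution of the Bellman equations of the game with
available actions restricted to `Av'` (the value function of that game). -/
def IsLeastSolutionOn (G : SG S A) (Av' : S → Finset A) (V : S → ℝ) : Prop :=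
  G.IsSolutionOn Av' V ∧ ∀ f, G.IsSolutionOn Av' f → ∀ s, V s ≤ f s

/-- `V` is the value function of `G`: the least solution of the Bellman
equations, in the pointwise order. -/
def IsValue (G : SG S A) (V : S → ℝ) : Prop := G.IsLeastSolutionOn G.Av V

/-- `U` is the greatest solution of the Bellman equations of `G`, in the
pointwise order. -/
def IsGreatestSolution (G : SG S A) (U : S → ℝ) : Prop :=
  G.IsSolution U ∧ ∀ f, G.IsSolution f → ∀ s, f s ≤ U s

/-- `(s,a)` exits `T`: some successor with positive probability is outside `T`. -/
def Exits (G : SG S A) (T : Finset S) (s : S) (a : A) : Prop :=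
  ∃ s', s' ∉ T ∧ 0 < G.δ s a s'

/-- `exit^max_f(T)`: the maximum of `f(s,a)` over Maximizer states `s ∈ T`
and available actions `a` with `(s,a)` exiting `T` (max ∅ = 0). -/
noncomputable def exitMax (G : SG S A) (f : S → ℝ) (T : Finset S) : ℝ :=
  sSup (insert (0:ℝ)
    {x : ℝ | ∃ s ∈ T, G.isMax s = true ∧ ∃ a ∈ G.Av s, G.Exits T s a ∧ x = G.fval f s a})

/-- `exit^min_f(T)`: the minimum of `f(s,a)` over Minimizer states `s ∈ T`
and available actions `a` with `(s,a)` exiting `T` (min ∅ = 1). -/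
noncomputable def exitMin (G : SG S A) (f : S → ℝ) (T : Finset S) : ℝ :=
  sInf (insert (1:ℝ)
    {x : ℝ | ∃ s ∈ T, G.isMax s = false ∧ ∃ a ∈ G.Av s, G.Exits T s a ∧ x = G.fval f s a})

/-- `T` is an end component of the game with available actions restricted to
`Av'`: `T` is nonempty and there is a nonempty set `B` of actions, each
available at some state of `T`, such that (1) every `a ∈ B ∩ Av'(s)` for
`s ∈ T` stays in `T`, and (2) every state of `T` can reach every other state
of `T` by a finite path staying in `T` and using only actions of `B`. -/
def IsECOn (G : SG S A) (Av' : S → Finset A) (T : Finset S) : Prop :=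
  T.Nonempty ∧ ∃ B : Finset A, B.Nonempty ∧
    (∀ a ∈ B, ∃ s ∈ T, a ∈ Av' s) ∧
    (∀ s ∈ T, ∀ a ∈ B ∩ Av' s, ∀ s', 0 < G.δ s a s' → s' ∈ T) ∧
    (∀ s ∈ T, ∀ s' ∈ T, Relation.ReflTransGen
      (fun x y => x ∈ T ∧ ∃ a ∈ B ∩ Av' x, 0 < G.δ x a y) s s')

/-- `T` is an end component (EC) of `G`. -/
def IsEC (G : SG S A) (T : Finset S) : Prop := G.IsECOn G.Av T

/-- `T` is a maximal end component (MEC) of the game with available actions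
restricted to `Av'`. -/
def IsMECOn (G : SG S A) (Av' : S → Finset A) (T : Finset S) : Prop :=
  G.IsECOn Av' T ∧ ∀ T', G.IsECOn Av' T' → T ⊆ T' → T = T'

/-- `T` is a maximal end component (MEC) of `G`. -/
def IsMEC (G : SG S A) (T : Finset S) : Prop := G.IsMECOn G.Av T

/-- The available actions of the game obtained from `G` by removing, at every
Minimizer state `s`, each action `a ∈ Av(s)` with `f(s,a) > f(s)`. -/
noncomputable def restrictAv (G : SG S A) (f : S → ℝ) (s : S) : Finset A :=
  if G.isMax s then G.Av s
  else (G.Av s).filter (fun a => ¬ f s < G.fval f s a)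

/-- `T` is a simple end component (SEC) of `G`, with respect to the value
function `V`: an EC with `V(s) = exit^max_V(T)` for all `s ∈ T`. -/
def IsSEC (G : SG S A) (V : S → ℝ) (T : Finset S) : Prop :=
  G.IsEC T ∧ ∀ s ∈ T, V s = G.exitMax V T

/-- `T` is a maximal simple end component (MSEC) of `G` with respect to `V`. -/
def IsMSEC (G : SG S A) (V : S → ℝ) (T : Finset S) : Prop :=
  G.IsSEC V T ∧ ∀ T', G.IsSEC V T' → T ⊆ T' → T = T'

/-- `DEFLATE(T,f)`: equal to `min(f(s), exit^max_f(T))` on `T` and to `f`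
outside `T`. -/
noncomputable def deflate (G : SG S A) (T : Finset S) (f : S → ℝ) (s : S) : ℝ :=
  if s ∈ T then min (f s) (G.exitMax f T) else f s

/-- The Bellman update: `1` at the target, `0` at the sink, and the Bellman
right-hand side elsewhere. -/
noncomputable def bellmanUpdate (G : SG S A) (f : S → ℝ) : S → ℝ :=
  fun s => if s = G.target then 1 else if s = G.sink then 0 else G.bellmanOn G.Av f s

/-- The lower sequence `L_n` of bounded value iteration: `L_0` is `0`
everywhere except `L_0(target) = 1`, and `L_{n+1}` is the Bellman update
of `L_n`. -/
noncomputable def Lseq (G : SG S A) : ℕ → S → ℝ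
  | 0 => fun s => if s = G.target then 1 else 0
  | n + 1 => G.bellmanUpdate (G.Lseq n)

end SG

namespace SG

variable {S A : Type} [Fintype S] [DecidableEq S] [Fintype A] [DecidableEq A]

lemma fval_nonneg (G : SG S A) {f : S → ℝ} (hf : ∀ s, 0 ≤ f s) (s : S) (a : A) :
    0 ≤ G.fval f s a :=
  Finset.sum_nonneg fun s' _ => mul_nonneg (G.δ_nonneg s a s') (hf s')

lemma fval_le_one (G : SG S A) {f : S → ℝ} (hf : InUnit f) {s : S} {a : A}
    (ha : a ∈ G.Av s) : G.fval f s a ≤ 1 := by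
  calc G.fval f s a ≤ ∑ s', G.δ s a s' * 1 :=
        Finset.sum_le_sum fun s' _ =>
          mul_le_mul_of_nonneg_left (hf s').2 (G.δ_nonneg s a s')
    _ = 1 := by simpa using G.δ_sum s a ha

lemma fval_mono (G : SG S A) {f g : S → ℝ} (h : ∀ s, f s ≤ g s) (s : S) (a : A) :
    G.fval f s a ≤ G.fval g s a :=
  Finset.sum_le_sum fun s' _ => mul_le_mul_of_nonneg_left (h s') (G.δ_nonneg s a s')

lemma fval_image_finite (G : SG S A) (f : S → ℝ) (s : S) :
    (G.fval f s '' ↑(G.Av s)).Finite :=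
  (G.Av s).finite_toSet.image _

lemma fval_image_nonempty (G : SG S A) (f : S → ℝ) (s : S) :
    (G.fval f s '' ↑(G.Av s)).Nonempty :=
  Set.Nonempty.image _ (Finset.coe_nonempty.2 (G.Av_nonempty s))

lemma bellmanOn_mono (G : SG S A) {f g : S → ℝ} (h : ∀ s, f s ≤ g s) (s : S) :
    G.bellmanOn G.Av f s ≤ G.bellmanOn G.Av g s := by
  unfold bellmanOn
  split_ifs
  · refine csSup_le (G.fval_image_nonempty f s) ?_
    rintro y ⟨a, ha, rfl⟩
    exact (G.fval_mono h s a).trans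
      (le_csSup (G.fval_image_finite g s).bddAbove ⟨a, ha, rfl⟩)
  · refine le_csInf (G.fval_image_nonempty g s) ?_
    rintro y ⟨a, ha, rfl⟩
    exact (csInf_le (G.fval_image_finite f s).bddBelow ⟨a, ha, rfl⟩).trans
      (G.fval_mono h s a)

lemma bellmanOn_unit (G : SG S A) {f : S → ℝ} (hf : InUnit f) (s : S) :
    0 ≤ G.bellmanOn G.Av f s ∧ G.bellmanOn G.Av f s ≤ 1 := by
  obtain ⟨a, ha⟩ := G.Av_nonempty s
  have ha' : (a : A) ∈ (↑(G.Av s) : Set A) := ha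
  unfold bellmanOn
  split_ifs
  · constructor
    · exact le_trans (G.fval_nonneg (fun s' => (hf s').1) s a)
        (le_csSup (G.fval_image_finite f s).bddAbove ⟨a, ha', rfl⟩)
    · exact csSup_le (G.fval_image_nonempty f s)
        (by rintro y ⟨b, hb, rfl⟩; exact G.fval_le_one hf hb)
  · constructor
    · exact le_csInf (G.fval_image_nonempty f s)
        (by rintro y ⟨b, hb, rfl⟩; exact G.fval_nonneg (fun s' => (hf s').1) s b)
    · exact le_trans (csInf_le (G.fval_image_finite f s).bddBelow ⟨a, ha', rfl⟩)
        (G.fval_le_one hf ha)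

lemma bellmanUpdate_mono (G : SG S A) {f g : S → ℝ} (h : ∀ s, f s ≤ g s) (s : S) :
    G.bellmanUpdate f s ≤ G.bellmanUpdate g s := by
  unfold bellmanUpdate
  split_ifs
  · exact le_refl 1
  · exact le_refl 0
  · exact G.bellmanOn_mono h s

lemma bellmanUpdate_unit (G : SG S A) {f : S → ℝ} (hf : InUnit f) :
    InUnit (G.bellmanUpdate f) := by
  intro s
  unfold bellmanUpdate
  split_ifs
  · exact ⟨zero_le_one, le_refl 1⟩
  · exact ⟨le_refl 0, zero_le_one⟩
  · exact G.bellmanOn_unit hf s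

/-- Knaster–Tarski: the least solution of the Bellman equations lies below
every pre-fixed point of the Bellman update. -/
lemma least_le_prefixed (G : SG S A) {V : S → ℝ} (hV : G.IsValue V)
    {f : S → ℝ} (hf : InUnit f) (hpre : ∀ s, G.bellmanUpdate f s ≤ f s) :
    ∀ s, V s ≤ f s := by
  classical
  set P : Set (S → ℝ) := {g | InUnit g ∧ ∀ s, G.bellmanUpdate g s ≤ g s} with hP
  have hfP : f ∈ P := ⟨hf, hpre⟩
  set h : S → ℝ := fun s => sInf ((fun g => g s) '' P) with hh
  have hne : ∀ s, ((fun g => g s) '' P).Nonempty := fun s => ⟨f s, f, hfP, rfl⟩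
  have hbdd : ∀ s, BddBelow ((fun g => g s) '' P) := by
    intro s
    refine ⟨0, ?_⟩
    rintro y ⟨g, hg, rfl⟩
    exact (hg.1 s).1
  have h_le : ∀ g ∈ P, ∀ s, h s ≤ g s := fun g hg s => csInf_le (hbdd s) ⟨g, hg, rfl⟩
  have hUnit : InUnit h := by
    intro s
    constructor
    · exact le_csInf (hne s) (by rintro y ⟨g, hg, rfl⟩; exact (hg.1 s).1)
    · exact (h_le f hfP s).trans (hf s).2
  have hFh_le : ∀ s, G.bellmanUpdate h s ≤ h s := by
    intro s
    refine le_csInf (hne s) ?_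
    rintro y ⟨g, hg, rfl⟩
    exact (G.bellmanUpdate_mono (fun s' => h_le g hg s') s).trans (hg.2 s)
  have hle_Fh : ∀ s, h s ≤ G.bellmanUpdate h s := by
    intro s
    exact h_le _ ⟨G.bellmanUpdate_unit hUnit,
      fun s' => G.bellmanUpdate_mono hFh_le s'⟩ s
  have hfix : ∀ s, h s = G.bellmanUpdate h s :=
    fun s => le_antisymm (hle_Fh s) (hFh_le s)
  have hsol : G.IsSolutionOn G.Av h := by
    refine ⟨hUnit, ?_, ?_, ?_⟩
    · rw [hfix]; unfold bellmanUpdate; rw [if_pos rfl]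
    · rw [hfix]; unfold bellmanUpdate
      rw [if_neg (Ne.symm G.target_ne_sink), if_pos rfl]
    · intro s hst hsz
      rw [hfix]; unfold bellmanUpdate; rw [if_neg hst, if_neg hsz]
  exact fun s => (hV.2 h hsol s).trans (h_le f hfP s)

end SG

/-- Let `T` be an end component with `t ∉ T`. Then
`V(s) ≤ exit^max_V(T)` for every `s ∈ T`: no state of an end component not
containing the target has a value exceeding the `V`-value of Maximizer's best
exiting action. -/
theorem stmt12 {S A : Type} [Fintype S] [DecidableEq S] [Fintype A] [DecidableEq A]
    (G : SG S A) (V : S → ℝ) (hV : G.IsValue V)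
    (T : Finset S) (hT : G.IsEC T) (ht : G.target ∉ T) :
    ∀ s ∈ T, V s ≤ G.exitMax V T := by
  classical
  obtain ⟨⟨hVu, hVt, hVz, hVb⟩, hleast⟩ := hV
  set m := G.exitMax V T with hmdef
  have hEsub : (insert (0:ℝ)
      {x : ℝ | ∃ s ∈ T, G.isMax s = true ∧ ∃ a ∈ G.Av s, G.Exits T s a ∧ x = G.fval V s a})
      ⊆ Set.Icc 0 1 := by
    rintro x (rfl | ⟨s, hs, _, a, ha, _, rfl⟩)
    · exact ⟨le_refl 0, zero_le_one⟩
    · exact ⟨G.fval_nonneg (fun s' => (hVu s').1) s a, G.fval_le_one hVu ha⟩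
  have hbddE : BddAbove (insert (0:ℝ)
      {x : ℝ | ∃ s ∈ T, G.isMax s = true ∧ ∃ a ∈ G.Av s, G.Exits T s a ∧ x = G.fval V s a}) :=
    ⟨1, fun x hx => (hEsub hx).2⟩
  have hm0 : 0 ≤ m := le_csSup hbddE (Set.mem_insert 0 _)
  have hexit_le : ∀ s ∈ T, G.isMax s = true → ∀ a ∈ G.Av s,
      G.Exits T s a → G.fval V s a ≤ m := by
    intro s hs hmax a ha hex
    exact le_csSup hbddE (Set.mem_insert_of_mem _ ⟨s, hs, hmax, a, ha, hex, rfl⟩)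
  obtain ⟨hTne, B, hBne, hBav, hBstay, hBconn⟩ := hT
  have hBA : ∀ s ∈ T, ∃ a, a ∈ B ∩ G.Av s := by
    intro s hs
    obtain ⟨b, hb⟩ := hBne
    obtain ⟨s'', hs'', hbs''⟩ := hBav b hb
    rcases (hBconn s hs s'' hs'').cases_head with heq | ⟨y, ⟨_, a, haB, _⟩, _⟩
    · exact ⟨b, Finset.mem_inter.2 ⟨hb, by rw [heq]; exact hbs''⟩⟩
    · exact ⟨a, haB⟩
  set f : S → ℝ := fun s => if s ∈ T then min (V s) m else V s with hfdef
  have hfT : ∀ s ∈ T, f s = min (V s) m := fun s hs => if_pos hs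
  have hfnT : ∀ s, s ∉ T → f s = V s := fun s hs => if_neg hs
  have hfleV : ∀ s, f s ≤ V s := by
    intro s
    by_cases hs : s ∈ T
    · rw [hfT s hs]; exact min_le_left _ _
    · rw [hfnT s hs]
  have hfleM : ∀ s ∈ T, f s ≤ m := by
    intro s hs; rw [hfT s hs]; exact min_le_right _ _
  have hfu : SG.InUnit f := by
    intro s
    refine ⟨?_, (hfleV s).trans (hVu s).2⟩
    by_cases hs : s ∈ T
    · rw [hfT s hs]; exact le_min (hVu s).1 hm0
    · rw [hfnT s hs]; exact (hVu s).1
  have hstay_le : ∀ s, ∀ a ∈ G.Av s, (∀ s', s' ∉ T → G.δ s a s' = 0) →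
      G.fval f s a ≤ m := by
    intro s a ha hst
    have h1 : G.fval f s a ≤ ∑ s', G.δ s a s' * m := by
      apply Finset.sum_le_sum
      intro s' _
      by_cases hs' : s' ∈ T
      · exact mul_le_mul_of_nonneg_left (hfleM s' hs') (G.δ_nonneg s a s')
      · rw [hst s' hs']; simp
    calc G.fval f s a ≤ _ := h1
      _ = m := by rw [← Finset.sum_mul, G.δ_sum s a ha, one_mul]
  have hpre : ∀ s, G.bellmanUpdate f s ≤ f s := by
    intro s
    by_cases hst : s = G.target
    · subst hst
      unfold SG.bellmanUpdate
      rw [if_pos rfl, hfnT _ ht, hVt]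
    by_cases hsz : s = G.sink
    · subst hsz
      unfold SG.bellmanUpdate
      rw [if_neg (Ne.symm G.target_ne_sink), if_pos rfl]
      exact (hfu G.sink).1
    unfold SG.bellmanUpdate
    rw [if_neg hst, if_neg hsz]
    by_cases hsT : s ∈ T
    · have hVbel : V s = G.bellmanOn G.Av V s := hVb s hst hsz
      by_cases hmax : G.isMax s = true
      · unfold SG.bellmanOn
        rw [if_pos hmax, hfT s hsT]
        refine csSup_le (G.fval_image_nonempty f s) ?_
        rintro y ⟨a, ha, rfl⟩
        have haA : a ∈ G.Av s := ha
        refine le_min ?_ ?_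
        · have h1 : G.fval V s a ≤ V s := by
            rw [hVbel]
            unfold SG.bellmanOn
            rw [if_pos hmax]
            exact le_csSup (G.fval_image_finite V s).bddAbove ⟨a, ha, rfl⟩
          exact (G.fval_mono hfleV s a).trans h1
        · by_cases hex : G.Exits T s a
          · exact (G.fval_mono hfleV s a).trans (hexit_le s hsT hmax a haA hex)
          · refine hstay_le s a haA ?_
            intro s' hs'
            by_contra hd
            exact hex ⟨s', hs', lt_of_le_of_ne (G.δ_nonneg s a s') (Ne.symm hd)⟩
      · unfold SG.bellmanOn
        rw [if_neg hmax, hfT s hsT]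
        obtain ⟨a0, ha0⟩ := hBA s hsT
        have ha0Av : a0 ∈ G.Av s := (Finset.mem_inter.1 ha0).2
        have ha0Av' : (a0 : A) ∈ (↑(G.Av s) : Set A) := ha0Av
        refine le_min ?_ ?_
        · rw [hVbel]
          unfold SG.bellmanOn
          rw [if_neg hmax]
          refine le_csInf (G.fval_image_nonempty V s) ?_
          rintro y ⟨a, ha, rfl⟩
          exact (csInf_le (G.fval_image_finite f s).bddBelow ⟨a, ha, rfl⟩).trans
            (G.fval_mono hfleV s a)
        · refine (csInf_le (G.fval_image_finite f s).bddBelow ⟨a0, ha0Av', rfl⟩).trans ?_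
          refine hstay_le s a0 ha0Av ?_
          intro s' hs'
          by_contra hd
          exact hs' (hBstay s hsT a0 ha0 s'
            (lt_of_le_of_ne (G.δ_nonneg s a0 s') (Ne.symm hd)))
    · rw [hfnT s hsT, hVb s hst hsz]
      exact G.bellmanOn_mono hfleV s
  intro s hs
  have hVf : V s ≤ f s :=
    G.least_le_prefixed ⟨⟨hVu, hVt, hVz, hVb⟩, hleast⟩ hfu hpre s
  rw [hfT s hs] at hVf
  exact (le_min_iff.1 hVf).2
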